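/- Let n and m be even positive integers with 2 ≤ m ≤ n − 2, and let a, b, t, λ be real numbers. Let Z be the n×2 matrix whose first column is 1 on the first n/2 rows and 0 elsewhere, and whose second column is 0 on the first n/2 rows and 1 elsewhere; let B be the 2×2 matrix with diagonal entries a and off-diagonal entries b, and M := Z·B·Zᵀ. Let P_L be the n×n diagonal matrix whose first m/2 and last m/2 diagonal entries are 1 and all other entries 0. Then det( t·Iₙ + λ·P_L − M ) = t^{n−m−2}·(t+λ)^{m−2}·P₁(t)·P₂(t), where P₁(t) := t(t+λ) − (n/2)(a+b)·( t + λ·(1 − m/n) ) and P₂(t) := t(t+λ) − (n/2)(a−b)·( t + λ·(1 − m/n) ). Moreover the roots of P₁ are t₁^± = (1/2)( (n/2)(a+b) − λ ± √( (λ + (n/2)(a+b))² − 2(a+b)λm ) ) and the roots of P₂ are t₂^± = (1/2)( (n/2)(a−b) − λ ± √( (λ + (n/2)(a−b))² − 2(a−b)λm ) ), whenever the arguments of the square roots are nonnegative. -/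
import Mathlib


open Matrix

noncomputable section

/-- The quadratic factor `P(x) = x(x+λ) − (n/2)c(x + λ(1 − m/n))` (with `c = a+b`
for `P₁` and `c = a−b` for `P₂`). -/
def quadFactor (n m : ℕ) (c lam x : ℝ) : ℝ :=
  x * (x + lam) - ((n : ℝ) / 2) * c * (x + lam * (1 - (m : ℝ) / (n : ℝ)))

/-- The roots `(1/2)((n/2)c − λ ± √((λ + (n/2)c)² − 2cλm))` of `quadFactor`. -/
def quadRoot (n m : ℕ) (c lam : ℝ) (sgn : ℝ) : ℝ :=
  (1 / 2) * ((n : ℝ) / 2 * c - lam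
    + sgn * Real.sqrt ((lam + (n : ℝ) / 2 * c) ^ 2 - 2 * c * lam * (m : ℝ)))

lemma root_lemma (n m : ℕ) (hn0 : (n:ℝ) ≠ 0) (c lam sgn : ℝ) (hs : sgn ^ 2 = 1)
    (h : 0 ≤ (lam + (n : ℝ) / 2 * c) ^ 2 - 2 * c * lam * (m : ℝ)) :
    quadFactor n m c lam (quadRoot n m c lam sgn) = 0 := by
  have hS : Real.sqrt ((lam + (n : ℝ) / 2 * c) ^ 2 - 2 * c * lam * (m : ℝ)) ^ 2
      = (lam + (n : ℝ) / 2 * c) ^ 2 - 2 * c * lam * (m : ℝ) := Real.sq_sqrt h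
  unfold quadFactor quadRoot
  set S := Real.sqrt ((lam + (n : ℝ) / 2 * c) ^ 2 - 2 * c * lam * (m : ℝ)) with hSdef
  have key : ((n:ℝ)/2)*c*(lam*((m:ℝ)/(n:ℝ))) = c*lam*(m:ℝ)/2 := by
    field_simp
  linear_combination key + (S^2/4)*hs + (1/4)*hS


lemma sum_three (N c1 c2 : ℕ) (h1 : c1 ≤ c2) (h2 : c2 ≤ N) (f : ℕ → ℝ) (x y z : ℝ)
    (hx : ∀ i, i < c1 → f i = x) (hy : ∀ i, c1 ≤ i → i < c2 → f i = y)
    (hz : ∀ i, c2 ≤ i → i < N → f i = z) :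
    ∑ i ∈ Finset.range N, f i = (c1 : ℝ) * x + ((c2 - c1 : ℕ) : ℝ) * y + ((N - c2 : ℕ) : ℝ) * z := by
  rw [Finset.range_eq_Ico, ← Finset.sum_Ico_consecutive f (Nat.zero_le c2) h2,
    ← Finset.sum_Ico_consecutive f (Nat.zero_le c1) h1]
  rw [Finset.sum_congr rfl (fun i hi => hx i (Finset.mem_Ico.1 hi).2),
    Finset.sum_congr rfl (fun i hi => hy i (Finset.mem_Ico.1 hi).1 (Finset.mem_Ico.1 hi).2),
    Finset.sum_congr rfl (fun i hi => hz i (Finset.mem_Ico.1 hi).1 (Finset.mem_Ico.1 hi).2)]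
  simp [Nat.card_Ico, nsmul_eq_mul]

lemma prod_three (N c1 c2 : ℕ) (h1 : c1 ≤ c2) (h2 : c2 ≤ N) (f : ℕ → ℝ) (x y z : ℝ)
    (hx : ∀ i, i < c1 → f i = x) (hy : ∀ i, c1 ≤ i → i < c2 → f i = y)
    (hz : ∀ i, c2 ≤ i → i < N → f i = z) :
    ∏ i ∈ Finset.range N, f i = x ^ c1 * y ^ (c2 - c1) * z ^ (N - c2) := by
  rw [Finset.range_eq_Ico, ← Finset.prod_Ico_consecutive f (Nat.zero_le c2) h2,
    ← Finset.prod_Ico_consecutive f (Nat.zero_le c1) h1]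
  rw [Finset.prod_congr rfl (fun i hi => hx i (Finset.mem_Ico.1 hi).2),
    Finset.prod_congr rfl (fun i hi => hy i (Finset.mem_Ico.1 hi).1 (Finset.mem_Ico.1 hi).2),
    Finset.prod_congr rfl (fun i hi => hz i (Finset.mem_Ico.1 hi).1 (Finset.mem_Ico.1 hi).2)]
  simp [Nat.card_Ico]

lemma det_main (n m p q : ℕ) (hn : n = 2*p) (hm : m = 2*q) (hq : 1 ≤ q) (hpq : q+1 ≤ p)
    (a b lam t : ℝ) (ht : t ≠ 0) (htl : t + lam ≠ 0) :
    Matrix.det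
        (t • (1 : Matrix (Fin n) (Fin n) ℝ)
          + lam • Matrix.diagonal (fun i : Fin n =>
              if (i : ℕ) < m / 2 ∨ n - m / 2 ≤ (i : ℕ) then (1 : ℝ) else 0)
          - (Matrix.of (fun (i : Fin n) (j : Fin 2) =>
                if j = 0 then (if (i : ℕ) < n / 2 then (1 : ℝ) else 0)
                else (if (i : ℕ) < n / 2 then 0 else 1))
              * !![a, b; b, a]
              * (Matrix.of (fun (i : Fin n) (j : Fin 2) =>
                  if j = 0 then (if (i : ℕ) < n / 2 then (1 : ℝ) else 0)
                  else (if (i : ℕ) < n / 2 then 0 else 1)))ᵀ))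
      = t ^ (n - m - 2) * (t + lam) ^ (m - 2)
          * quadFactor n m (a + b) lam t * quadFactor n m (a - b) lam t := by
  have hm2 : m / 2 = q := by omega
  have hn2 : n / 2 = p := by omega
  set Z : Matrix (Fin n) (Fin 2) ℝ := Matrix.of (fun (i : Fin n) (j : Fin 2) =>
      if j = 0 then (if (i : ℕ) < n / 2 then (1 : ℝ) else 0)
      else (if (i : ℕ) < n / 2 then 0 else 1)) with hZ
  set B : Matrix (Fin 2) (Fin 2) ℝ := !![a, b; b, a] with hB
  set d : Fin n → ℝ := fun i => if (i : ℕ) < q ∨ n - q ≤ (i : ℕ) then t + lam else t with hd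
  have hdne : ∀ i, d i ≠ 0 := by
    intro i; dsimp only [d]; split
    · exact htl
    · exact ht
  have hstep1 : (t • (1 : Matrix (Fin n) (Fin n) ℝ)
      + lam • Matrix.diagonal (fun i : Fin n =>
          if (i : ℕ) < m / 2 ∨ n - m / 2 ≤ (i : ℕ) then (1 : ℝ) else 0))
      = Matrix.diagonal d := by
    rw [hm2]
    ext i j
    rcases eq_or_ne i j with rfl | hij
    · simp only [Matrix.add_apply, Matrix.smul_apply, Matrix.one_apply_eq,
        Matrix.diagonal_apply_eq, smul_eq_mul, d]
      split_ifs <;> ring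
    · simp [Matrix.one_apply_ne hij, Matrix.diagonal_apply_ne _ hij, hij]
  set E : Matrix (Fin n) (Fin n) ℝ := Matrix.diagonal (fun i => (d i)⁻¹) with hE
  have hDE : Matrix.diagonal d * E = 1 := by
    rw [hE, Matrix.diagonal_mul_diagonal]
    rw [show (fun i => d i * (d i)⁻¹) = fun _ => (1:ℝ) from
      funext fun i => mul_inv_cancel₀ (hdne i), Matrix.diagonal_one]
  have key : Matrix.diagonal d - Z * B * Zᵀ
      = Matrix.diagonal d * (1 + -(E * Z * B) * Zᵀ) := by
    rw [Matrix.mul_add, Matrix.mul_one, Matrix.neg_mul, Matrix.mul_neg, sub_eq_add_neg]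
    congr 1
    congr 1
    calc Z * B * Zᵀ = (Matrix.diagonal d * E) * (Z * B * Zᵀ) := by
          rw [hDE, Matrix.one_mul]
      _ = Matrix.diagonal d * (E * Z * B * Zᵀ) := by
          simp only [Matrix.mul_assoc]
  rw [hstep1, key, Matrix.det_mul, Matrix.det_one_add_mul_comm]
  set s : ℝ := (q:ℝ)*(t+lam)⁻¹ + ((p-q:ℕ):ℝ)*t⁻¹ with hsdef
  have hZEZ : Zᵀ * E * Z = Matrix.diagonal (fun _ : Fin 2 => s) := by
    ext j k
    fin_cases j <;> fin_cases k <;>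
      (rw [Matrix.mul_apply]; simp [hZ, hE, Matrix.mul_diagonal,
        Matrix.transpose_apply, Matrix.of_apply, hd, hn2, Matrix.diagonal_apply,
        mul_ite, ite_mul])
    · -- (0,0)
      rw [Fin.sum_univ_eq_sum_range
        (fun i : ℕ => if i < p then if i < p then (if i < q ∨ n ≤ i + q then t + lam else t)⁻¹ else 0 else 0) n,
        sum_three n q p (by omega) (by omega) _ (t+lam)⁻¹ t⁻¹ 0
          (fun i hi => by rw [if_pos (by omega : i < p), if_pos (by omega : i < p),
            if_pos (Or.inl hi)])
          (fun i h1 h2 => by rw [if_pos h2, if_pos h2, if_neg (by omega)])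
          (fun i h1 h2 => by rw [if_neg (by omega)]), hsdef]
      ring
    · -- (0,1)
      refine Finset.sum_eq_zero (fun i _ => ?_)
      split_ifs <;> rfl
    · -- (1,0)
      refine Finset.sum_eq_zero (fun i _ => ?_)
      split_ifs <;> rfl
    · -- (1,1)
      rw [Fin.sum_univ_eq_sum_range
        (fun i : ℕ => if i < p then 0 else if i < p then 0 else (if i < q ∨ n ≤ i + q then t + lam else t)⁻¹) n,
        sum_three n p (n - q) (by omega) (by omega) _ 0 t⁻¹ (t+lam)⁻¹
          (fun i hi => by rw [if_pos hi])
          (fun i h1 h2 => by rw [if_neg (by omega), if_neg (by omega), if_neg (by omega)])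
          (fun i h1 h2 => by rw [if_neg (by omega), if_neg (by omega), if_pos (by omega)]),
        show n - q - p = p - q by omega, show n - (n - q) = q by omega, hsdef]
      ring
  have e : Zᵀ * -(E * Z * B) = -((Zᵀ * E * Z) * B) := by
    rw [Matrix.mul_neg]; simp only [Matrix.mul_assoc]
  have h2x2 : (1 : Matrix (Fin 2) (Fin 2) ℝ) + Zᵀ * -(E * Z * B)
      = !![1 - s*a, -(s*b); -(s*b), 1 - s*a] := by
    rw [e, hZEZ, hB]
    ext i j
    fin_cases i <;> fin_cases j <;>
      simp [Matrix.diagonal_mul, Matrix.one_apply] <;> ring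
  rw [h2x2, Matrix.det_fin_two_of, Matrix.det_diagonal]
  have hprod : (∏ i : Fin n, d i) = (t+lam)^q * t^(n - q - q) * (t+lam)^(n - (n - q)) := by
    simp only [hd]
    rw [Fin.prod_univ_eq_prod_range (fun i : ℕ => if i < q ∨ n - q ≤ i then t + lam else t) n]
    exact prod_three n q (n - q) (by omega) (by omega) _ (t+lam) t (t+lam)
      (fun i hi => by rw [if_pos (Or.inl hi)])
      (fun i h1 h2 => by rw [if_neg (by omega)])
      (fun i h1 h2 => by rw [if_pos (by omega)])
  rw [hprod]
  set k := p - q - 1 with hk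
  set l := q - 1 with hl
  have hqf : ∀ c : ℝ, quadFactor n m c lam t = t * (t + lam) * (1 - s * c) := by
    intro c
    unfold quadFactor
    rw [hsdef, Nat.cast_sub (by omega : q ≤ p), hn, hm]
    have hp0 : (p:ℝ) ≠ 0 := Nat.cast_ne_zero.mpr (by omega)
    push_cast
    field_simp
    ring
  rw [hqf, hqf,
    show n - q - q = 2*k + 2 by omega, show n - (n - q) = l + 1 by omega,
    show q = l + 1 by omega, show n - m - 2 = 2*k by omega, show m - 2 = 2*l by omega]
  ring

/-- **Proposition 3 (determinant of a perturbed rank-2 matrix).** With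
`M = Z B Zᵀ` and `P_L` the diagonal matrix whose first `m/2` and last `m/2`
diagonal entries equal `1`,
`det(t·Iₙ + λ·P_L − M) = t^{n−m−2}(t+λ)^{m−2} P₁(t) P₂(t)`; moreover, whenever
the discriminants are nonnegative, `t₁^±` are roots of `P₁` and `t₂^±` of `P₂`. -/
theorem det_perturbed_rank_two
    (n m : ℕ) (hn : Even n) (hm : Even m) (hm2 : 2 ≤ m) (hmn : m ≤ n - 2)
    (a b t lam : ℝ) :
    Matrix.det
        (t • (1 : Matrix (Fin n) (Fin n) ℝ)
          + lam • Matrix.diagonal (fun i : Fin n =>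
              if (i : ℕ) < m / 2 ∨ n - m / 2 ≤ (i : ℕ) then (1 : ℝ) else 0)
          - (Matrix.of (fun (i : Fin n) (j : Fin 2) =>
                if j = 0 then (if (i : ℕ) < n / 2 then (1 : ℝ) else 0)
                else (if (i : ℕ) < n / 2 then 0 else 1))
              * !![a, b; b, a]
              * (Matrix.of (fun (i : Fin n) (j : Fin 2) =>
                  if j = 0 then (if (i : ℕ) < n / 2 then (1 : ℝ) else 0)
                  else (if (i : ℕ) < n / 2 then 0 else 1)))ᵀ))
      = t ^ (n - m - 2) * (t + lam) ^ (m - 2)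
          * quadFactor n m (a + b) lam t * quadFactor n m (a - b) lam t
    ∧
    (0 ≤ (lam + (n : ℝ) / 2 * (a + b)) ^ 2 - 2 * (a + b) * lam * (m : ℝ) →
      quadFactor n m (a + b) lam (quadRoot n m (a + b) lam 1) = 0 ∧
      quadFactor n m (a + b) lam (quadRoot n m (a + b) lam (-1)) = 0)
    ∧
    (0 ≤ (lam + (n : ℝ) / 2 * (a - b)) ^ 2 - 2 * (a - b) * lam * (m : ℝ) →
      quadFactor n m (a - b) lam (quadRoot n m (a - b) lam 1) = 0 ∧
      quadFactor n m (a - b) lam (quadRoot n m (a - b) lam (-1)) = 0) := by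
  obtain ⟨p, hp⟩ := hn
  obtain ⟨q, hq'⟩ := hm
  have hn' : n = 2 * p := by omega
  have hm' : m = 2 * q := by omega
  have hq : 1 ≤ q := by omega
  have hpq : q + 1 ≤ p := by omega
  have hn0 : (n : ℝ) ≠ 0 := Nat.cast_ne_zero.mpr (by omega)
  refine ⟨?_, fun h => ⟨root_lemma n m hn0 _ _ _ (by norm_num) h,
      root_lemma n m hn0 _ _ _ (by norm_num) h⟩,
    fun h => ⟨root_lemma n m hn0 _ _ _ (by norm_num) h,
      root_lemma n m hn0 _ _ _ (by norm_num) h⟩⟩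
  set f : ℝ → ℝ := fun t' => Matrix.det
        (t' • (1 : Matrix (Fin n) (Fin n) ℝ)
          + lam • Matrix.diagonal (fun i : Fin n =>
              if (i : ℕ) < m / 2 ∨ n - m / 2 ≤ (i : ℕ) then (1 : ℝ) else 0)
          - (Matrix.of (fun (i : Fin n) (j : Fin 2) =>
                if j = 0 then (if (i : ℕ) < n / 2 then (1 : ℝ) else 0)
                else (if (i : ℕ) < n / 2 then 0 else 1))
              * !![a, b; b, a]
              * (Matrix.of (fun (i : Fin n) (j : Fin 2) =>
                  if j = 0 then (if (i : ℕ) < n / 2 then (1 : ℝ) else 0)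
                  else (if (i : ℕ) < n / 2 then 0 else 1)))ᵀ)) with hf
  set g : ℝ → ℝ := fun t' => t' ^ (n - m - 2) * (t' + lam) ^ (m - 2)
          * quadFactor n m (a + b) lam t' * quadFactor n m (a - b) lam t' with hg
  have hfc : Continuous f := by
    apply Continuous.matrix_det
    exact (((continuous_id.smul continuous_const).add continuous_const).sub continuous_const)
  have hgc : Continuous g := by
    unfold g
    unfold quadFactor
    fun_prop
  have hdense : Dense ({(0:ℝ), -lam}ᶜ) :=
    ((Set.finite_singleton (-lam)).insert 0).countable.dense_compl ℝ
  have heq : Set.EqOn f g ({(0:ℝ), -lam}ᶜ) := by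
    intro x hx
    simp only [Set.mem_compl_iff, Set.mem_insert_iff, Set.mem_singleton_iff, not_or] at hx
    exact det_main n m p q hn' hm' hq hpq a b lam x hx.1 (by
      intro hc; exact hx.2 (by linarith))
  exact congrFun (Continuous.ext_on hdense hfc hgc heq) t

end
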